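/- For s on the unit circle with s² = t, the matrices B_t(σ_1) and B_t(σ_2) satisfy B_t(σ_i)* · J · B_t(σ_i) = J, where J = [[s + s⁻¹, -s⁻¹],[-s, s + s⁻¹]]; consequently B_t(w)* J B_t(w) = J for every w ∈ B_3. -/

import Mathlib

open Matrix

/-- Letters generating the 3-strand braid group: σ₁, σ₂ and their formal inverses. -/
inductive BLetter
  | s1 | s2 | s1inv | s2inv
deriving DecidableEq

/-- The reduced Burau representation of `B₃` evaluated at `t ∈ ℂ`, on each letter. -/
noncomputable def burauLetter (t : ℂ) : BLetter → Matrix (Fin 2) (Fin 2) ℂ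
  | .s1 => !![-t, 1; 0, 1]
  | .s2 => !![1, 0; t, -t]
  | .s1inv => !![-t⁻¹, t⁻¹; 0, 1]
  | .s2inv => !![1, 0; 1, -t⁻¹]

/-- The Burau matrix of a word in the generators and their inverses. -/
noncomputable def burauWord (t : ℂ) (w : List BLetter) : Matrix (Fin 2) (Fin 2) ℂ :=
  (w.map (burauLetter t)).prod

/-- Squier's Hermitian matrix `J = [[s + s⁻¹, -s⁻¹],[-s, s + s⁻¹]]`. -/
noncomputable def squierJ (s : ℂ) : Matrix (Fin 2) (Fin 2) ℂ :=
  !![s + s⁻¹, -s⁻¹; -s, s + s⁻¹]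

set_option maxHeartbeats 1000000 in
lemma burau_letter_preserves (s t : ℂ) (hs : ‖s‖ = 1) (ht : t = s ^ 2)
    (a : BLetter) :
    (burauLetter t a)ᴴ * squierJ s * burauLetter t a = squierJ s := by
  have hs0 : s ≠ 0 := by
    intro h; rw [h] at hs; simp at hs
  have hconj : (starRingEnd ℂ) s = s⁻¹ := by
    have h1 : (starRingEnd ℂ) s * s = 1 := by
      rw [mul_comm, Complex.mul_conj]
      norm_cast
      rw [Complex.normSq_eq_norm_sq, hs]
      norm_num
    field_simp
    linear_combination h1
  subst ht
  cases a <;> ext i j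
  all_goals fin_cases i <;> fin_cases j
  all_goals simp [burauLetter, squierJ, Matrix.mul_apply, Fin.sum_univ_two, hconj, map_pow,
    map_inv₀]
  all_goals field_simp
  all_goals try ring
  all_goals field_simp
  all_goals ring

/-- For `s` on the unit circle with `s² = t`, the Burau
representation preserves Squier's form: `B_t(w)* · J · B_t(w) = J` for every
`w ∈ B₃`. -/
theorem burau_preserves_squier_form (s t : ℂ) (hs : ‖s‖ = 1) (ht : t = s ^ 2)
    (w : List BLetter) :
    (burauWord t w)ᴴ * squierJ s * burauWord t w = squierJ s := by
  induction w with
  | nil => simp [burauWord]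
  | cons a l ih =>
      have : burauWord t (a :: l) = burauLetter t a * burauWord t l := by
        simp [burauWord]
      rw [this, conjTranspose_mul]
      calc (burauWord t l)ᴴ * (burauLetter t a)ᴴ * squierJ s * (burauLetter t a * burauWord t l)
          = (burauWord t l)ᴴ * ((burauLetter t a)ᴴ * squierJ s * burauLetter t a) * burauWord t l := by
            noncomm_ring
        _ = squierJ s := by rw [burau_letter_preserves s t hs ht a]; exact ih
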